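/- Let 0<q<1 and let (B_s)_{s≥0} satisfy the q-Brownian hypotheses. Then for all 0 ≤ t₁ < t₂ ≤ u₁ < u₂: E[(B_{t₂} − B_{t₁})·(B_{u₂} − B_{u₁})³] = −(1−q)·(u₂ − u₁)·(t₂ − t₁). -/

import Mathlib

open MeasureTheory Filter

/-- `[n]_q = 1 + q + ⋯ + q^{n-1}`. -/
noncomputable def qNat (q : ℝ) (n : ℕ) : ℝ := ∑ i ∈ Finset.range n, q ^ i

/-- `[n]_q! = [1]_q [2]_q ⋯ [n]_q`. -/
noncomputable def qFact (q : ℝ) (n : ℕ) : ℝ := ∏ i ∈ Finset.range n, qNat q (i + 1)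

/-- Monic continuous q-Hermite polynomials: `h_0 = 1`, `h_1 = x`,
`x·h_n(x;t) = h_{n+1}(x;t) + t·[n]_q·h_{n−1}(x;t)`. -/
noncomputable def qH (q : ℝ) : ℕ → ℝ → ℝ → ℝ
  | 0, _, _ => 1
  | 1, x, _ => x
  | (n + 2), x, t => x * qH q (n + 1) x t - t * qNat q (n + 1) * qH q n x t

/-!
Write `x = B s`, `y = B u` for `s ≤ u` and `Dₙ = hₙ(y; u) - hₙ(x; s)`. Using the explicit `h₁, h₂, h₃`,
`(y - x)³ + (1 - q)(u - s) x = D₃ - 3x D₂ + (3x² + (2 + q)u) D₁`, and each `Dₙ` is orthogonal to every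
bounded `ℱ s`-measurable `Y` by the martingale property. Hence `E[Y (y - x)³] = -(1 - q)(u - s) E[Y x]`.
With `s = u₁` and `Y = B t₂ - B t₁` this reduces the claim to `E[B s B u] = s` for `s ≤ u`, which
is again the martingale property of `h₁` together with `E[(B s)²] = s`.
-/

open scoped ENNReal

@[simp]
lemma qH_one (q x t : ℝ) : qH q 1 x t = x := rfl

lemma qNat_two (q : ℝ) : qNat q 2 = 1 + q := by
  simp [qNat, Finset.sum_range_succ]

@[simp]
lemma qH_two (q x t : ℝ) : qH q 2 x t = x ^ 2 - t := by
  simp [qH, qNat, sq]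

@[simp]
lemma qH_three (q x t : ℝ) : qH q 3 x t = x ^ 3 - (2 + q) * t * x := by
  rw [qH, qH_two, qNat_two, qH]
  ring

@[simp]
lemma qFact_one (q : ℝ) : qFact q 1 = 1 := by
  simp [qFact, qNat]

section MemLpTop

variable {Ω : Type*} {m0 : MeasurableSpace Ω} {μ : Measure Ω} [IsFiniteMeasure μ]

lemma MeasureTheory.MemLp.qH {X : Ω → ℝ} (hX : MemLp X ∞ μ) (q t : ℝ) :
    ∀ n, MemLp (fun ω => qH q n (X ω) t) ∞ μ
  | 0 => memLp_const 1
  | 1 => hX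
  | n + 2 => ((MemLp.qH hX q t (n + 1)).mul' hX).sub
      ((MemLp.qH hX q t n).const_mul (t * qNat q (n + 1)))

end MemLpTop

lemma integral_mul_condExp_of_stronglyMeasurable {Ω : Type*} {m m0 : MeasurableSpace Ω}
    {μ : Measure Ω} [IsFiniteMeasure μ] (hm : m ≤ m0) {Y g : Ω → ℝ}
    (hY : StronglyMeasurable[m] Y) (hYb : MemLp Y ∞ μ) (hg : Integrable g μ) :
    ∫ ω, Y ω * (μ[g|m]) ω ∂μ = ∫ ω, Y ω * g ω ∂μ := by
  calc ∫ ω, Y ω * (μ[g|m]) ω ∂μ = ∫ ω, (μ[Y * g|m]) ω ∂μ :=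
        integral_congr_ae (condExp_mul_of_stronglyMeasurable_left hY
          (hg.mul_of_top_right hYb) hg).symm
    _ = ∫ ω, Y ω * g ω ∂μ := integral_condExp hm

namespace QBrownian

variable {Ω : Type*} {m0 : MeasurableSpace Ω} {μ : Measure Ω}
  {ℱ : Filtration ℝ m0} {q : ℝ} {B : ℝ → Ω → ℝ}

lemma integral_sq (hB0 : ∀ ω, B 0 ω = 0)
    (horth : ∀ s : ℝ, 0 < s → ∀ m n : ℕ,
      ∫ ω, qH q n (B s ω) s * qH q m (B s ω) s ∂μ = if m = n then qFact q n * s ^ n else 0)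
    {s : ℝ} (hs : 0 ≤ s) :
    ∫ ω, B s ω * B s ω ∂μ = s := by
  rcases hs.eq_or_lt with rfl | hs
  · simp [hB0]
  · simpa using horth s hs 1 1

variable [IsFiniteMeasure μ]

lemma integral_mul_qH_sub_eq_zero (hB : ∀ s, 0 ≤ s → MemLp (B s) ∞ μ)
    (hmart : ∀ (n : ℕ) (s u : ℝ), 0 ≤ s → s ≤ u →
      μ[fun ω => qH q n (B u ω) u | ℱ s] =ᵐ[μ] fun ω => qH q n (B s ω) s)
    {s u : ℝ} (hs : 0 ≤ s) (hsu : s ≤ u) {Y : Ω → ℝ} (hY : StronglyMeasurable[ℱ s] Y)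
    (hYb : MemLp Y ∞ μ) (n : ℕ) :
    ∫ ω, Y ω * (qH q n (B u ω) u - qH q n (B s ω) s) ∂μ = 0 := by
  have hint : ∀ r, 0 ≤ r → Integrable (fun ω => Y ω * qH q n (B r ω) r) μ := fun r hr =>
    (((hB r hr).qH q r n).integrable le_top).mul_of_top_right hYb
  simp_rw [mul_sub]
  rw [integral_sub (hint u (hs.trans hsu)) (hint s hs), sub_eq_zero,
    ← integral_mul_condExp_of_stronglyMeasurable (ℱ.le s) hY hYb
      (((hB u (hs.trans hsu)).qH q u n).integrable le_top)]
  exact integral_congr_ae ((hmart n s u hs hsu).mono fun ω hω => congrArg (Y ω * ·) hω)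

lemma integral_mul_eq_of_le (hB : ∀ s, 0 ≤ s → MemLp (B s) ∞ μ) (hadp : Adapted ℱ B)
    (hB0 : ∀ ω, B 0 ω = 0)
    (hmart : ∀ (n : ℕ) (s u : ℝ), 0 ≤ s → s ≤ u →
      μ[fun ω => qH q n (B u ω) u | ℱ s] =ᵐ[μ] fun ω => qH q n (B s ω) s)
    (horth : ∀ s : ℝ, 0 < s → ∀ m n : ℕ,
      ∫ ω, qH q n (B s ω) s * qH q m (B s ω) s ∂μ = if m = n then qFact q n * s ^ n else 0)
    {s u : ℝ} (hs : 0 ≤ s) (hsu : s ≤ u) :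
    ∫ ω, B s ω * B u ω ∂μ = s := by
  have h := integral_mul_qH_sub_eq_zero hB hmart hs hsu (hadp s).stronglyMeasurable
    (hB s hs) 1
  have hint : ∀ r, 0 ≤ r → Integrable (fun ω => B s ω * B r ω) μ := fun r hr =>
    ((hB r hr).integrable le_top).mul_of_top_right (hB s hs)
  simp_rw [qH_one, mul_sub] at h
  rw [integral_sub (hint u (hs.trans hsu)) (hint s hs), sub_eq_zero] at h
  rw [h, integral_sq hB0 horth hs]

lemma integral_mul_sub_pow_three (hB : ∀ s, 0 ≤ s → MemLp (B s) ∞ μ) (hadp : Adapted ℱ B)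
    (hmart : ∀ (n : ℕ) (s u : ℝ), 0 ≤ s → s ≤ u →
      μ[fun ω => qH q n (B u ω) u | ℱ s] =ᵐ[μ] fun ω => qH q n (B s ω) s)
    {s u : ℝ} (hs : 0 ≤ s) (hsu : s ≤ u) {Y : Ω → ℝ} (hY : StronglyMeasurable[ℱ s] Y)
    (hYb : MemLp Y ∞ μ) :
    ∫ ω, Y ω * (B u ω - B s ω) ^ 3 ∂μ = -(1 - q) * (u - s) * ∫ ω, Y ω * B s ω ∂μ := by
  have hBs := hB s hs
  have hBs_meas : StronglyMeasurable[ℱ s] (B s) := (hadp s).stronglyMeasurable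
  have hint : ∀ {Z : Ω → ℝ}, MemLp Z ∞ μ → ∀ n,
      Integrable (fun ω => Z ω * (qH q n (B u ω) u - qH q n (B s ω) s)) μ := fun hZ n =>
    ((((hB u (hs.trans hsu)).qH q u n).sub (hBs.qH q s n)).integrable le_top).mul_of_top_right hZ
  have hZ₂_meas : StronglyMeasurable[ℱ s] (fun ω => -3 * (Y ω * B s ω)) :=
    (hY.mul hBs_meas).const_mul _
  have hZ₃_meas : StronglyMeasurable[ℱ s] (fun ω => Y ω * (3 * (B s ω * B s ω) + (2 + q) * u)) :=
    hY.mul (((hBs_meas.mul hBs_meas).const_mul 3).add stronglyMeasurable_const)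
  have hZ₂ : MemLp (fun ω => -3 * (Y ω * B s ω)) ∞ μ := (hBs.mul' (r := ∞) hYb).const_mul (-3)
  have hZ₃ : MemLp (fun ω => Y ω * (3 * (B s ω * B s ω) + (2 + q) * u)) ∞ μ :=
    (((hBs.mul' (r := ∞) hBs).const_mul 3).add (memLp_const _)).mul' (r := ∞) hYb
  have hYBs : Integrable (fun ω => (1 - q) * (u - s) * (Y ω * B s ω)) μ :=
    ((hBs.integrable le_top).mul_of_top_right hYb).const_mul _
  calc ∫ ω, Y ω * (B u ω - B s ω) ^ 3 ∂μ
      = ∫ ω, (Y ω * (qH q 3 (B u ω) u - qH q 3 (B s ω) s)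
          + -3 * (Y ω * B s ω) * (qH q 2 (B u ω) u - qH q 2 (B s ω) s)
          + Y ω * (3 * (B s ω * B s ω) + (2 + q) * u) * (qH q 1 (B u ω) u - qH q 1 (B s ω) s))
          - (1 - q) * (u - s) * (Y ω * B s ω) ∂μ := by
        congr 1 with ω
        simp only [qH_one, qH_two, qH_three]
        ring
    _ = -(1 - q) * (u - s) * ∫ ω, Y ω * B s ω ∂μ := by
        have h₃₂ := (hint hYb 3).fun_add (hint hZ₂ 2)
        rw [integral_sub (h₃₂.fun_add (hint hZ₃ 1)) hYBs, integral_add h₃₂ (hint hZ₃ 1),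
          integral_add (hint hYb 3) (hint hZ₂ 2), integral_const_mul,
          integral_mul_qH_sub_eq_zero hB hmart hs hsu hY hYb,
          integral_mul_qH_sub_eq_zero hB hmart hs hsu hZ₂_meas hZ₂,
          integral_mul_qH_sub_eq_zero hB hmart hs hsu hZ₃_meas hZ₃]
        ring

end QBrownian

theorem q_brownian_first_cubed_moment_general
    {Ω : Type*} [m0 : MeasurableSpace Ω] (μ : Measure Ω) [IsProbabilityMeasure μ]
    (ℱ : Filtration ℝ m0) (q : ℝ)
    (B : ℝ → Ω → ℝ) (hadp : Adapted ℱ B) (hB0 : ∀ ω, B 0 ω = 0)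
    (hbdd : ∀ s : ℝ, 0 ≤ s → ∀ᵐ ω ∂μ, |B s ω| ≤ 2 * Real.sqrt s / Real.sqrt (1 - q))
    (hmart : ∀ (n : ℕ) (s u : ℝ), 0 ≤ s → s ≤ u →
      μ[fun ω => qH q n (B u ω) u | ℱ s] =ᵐ[μ] fun ω => qH q n (B s ω) s)
    (horth : ∀ s : ℝ, 0 < s → ∀ m n : ℕ,
      ∫ ω, qH q n (B s ω) s * qH q m (B s ω) s ∂μ =
        if m = n then qFact q n * s ^ n else 0)
    (t₁ t₂ u₁ u₂ : ℝ) (ht₁ : 0 ≤ t₁) (ht : t₁ < t₂) (htu : t₂ ≤ u₁) (hu : u₁ < u₂) :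
    ∫ ω, (B t₂ ω - B t₁ ω) * (B u₂ ω - B u₁ ω) ^ 3 ∂μ =
      -(1 - q) * (u₂ - u₁) * (t₂ - t₁) := by
  have hB : ∀ s, 0 ≤ s → MemLp (B s) ∞ μ := fun s hs =>
    memLp_top_of_bound ((hadp s).mono (ℱ.le s) le_rfl).aestronglyMeasurable _
      (by simpa only [Real.norm_eq_abs] using hbdd s hs)
  have ht₂ : 0 ≤ t₂ := ht₁.trans ht.le
  have hu₁ : 0 ≤ u₁ := ht₂.trans htu
  have hX : StronglyMeasurable[ℱ u₁] (fun ω => B t₂ ω - B t₁ ω) :=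
    ((hadp t₂).stronglyMeasurable.mono (ℱ.mono htu)).sub
      ((hadp t₁).stronglyMeasurable.mono (ℱ.mono (ht.le.trans htu)))
  have hcov : ∫ ω, (B t₂ ω - B t₁ ω) * B u₁ ω ∂μ = t₂ - t₁ := by
    have hint : ∀ r, 0 ≤ r → Integrable (fun ω => B r ω * B u₁ ω) μ := fun r hr =>
      ((hB u₁ hu₁).integrable le_top).mul_of_top_right (hB r hr)
    simp_rw [sub_mul]
    rw [integral_sub (hint t₂ ht₂) (hint t₁ ht₁),
      QBrownian.integral_mul_eq_of_le hB hadp hB0 hmart horth ht₂ htu,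
      QBrownian.integral_mul_eq_of_le hB hadp hB0 hmart horth ht₁ (ht.le.trans htu)]
  rw [QBrownian.integral_mul_sub_pow_three hB hadp hmart hu₁ hu.le hX
    ((hB t₂ ht₂).sub (hB t₁ ht₁)), hcov]

/-- for the q-Brownian motion and `0 ≤ t₁ < t₂ ≤ u₁ < u₂`,
`E[(B_{t₂} − B_{t₁})(B_{u₂} − B_{u₁})³] = −(1−q)(u₂ − u₁)(t₂ − t₁)`. -/
theorem q_brownian_first_cubed_moment
    {Ω : Type*} [m0 : MeasurableSpace Ω] (μ : Measure Ω) [IsProbabilityMeasure μ]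
    (ℱ : Filtration ℝ m0) (q : ℝ) (hq0 : 0 < q) (hq1 : q < 1)
    (B : ℝ → Ω → ℝ) (hadp : Adapted ℱ B) (hB0 : ∀ ω, B 0 ω = 0)
    (hbdd : ∀ s : ℝ, 0 ≤ s → ∀ᵐ ω ∂μ, |B s ω| ≤ 2 * Real.sqrt s / Real.sqrt (1 - q))
    (hmart : ∀ (n : ℕ) (s u : ℝ), 0 ≤ s → s ≤ u →
      μ[fun ω => qH q n (B u ω) u | ℱ s] =ᵐ[μ] fun ω => qH q n (B s ω) s)
    (horth : ∀ s : ℝ, 0 < s → ∀ m n : ℕ,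
      ∫ ω, qH q n (B s ω) s * qH q m (B s ω) s ∂μ =
        if m = n then qFact q n * s ^ n else 0)
    (t₁ t₂ u₁ u₂ : ℝ) (ht₁ : 0 ≤ t₁) (ht : t₁ < t₂) (htu : t₂ ≤ u₁) (hu : u₁ < u₂) :
    ∫ ω, (B t₂ ω - B t₁ ω) * (B u₂ ω - B u₁ ω) ^ 3 ∂μ =
      -(1 - q) * (u₂ - u₁) * (t₂ - t₁) :=
  q_brownian_first_cubed_moment_general (m0 := m0) μ ℱ q B hadp hB0 hbdd hmart horth t₁ t₂ u₁ u₂ ht₁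
    ht htu hu
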